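/- arXiv:1905.12092 — 2 statements merged into one kernel-verified Lean document; each statement's English description precedes it below -/
import Mathlib

section
/- If S is a representation of the quiver Q with dimension vector (s₋₁, s₀, s₁) that is locally injective (i.e., for all (λ₀,...,λ₃) ∈ ℂ⁴ away from a subset of codimension ≥ 2, the map Σλᵢfᵢ : ℂ^{s₋₁} → ℂ^{s₀} is injective) and s₋₁ ≥ 1, then s₀ ≥ s₋₁ + 1. -/
/-- A surrogate for "`S ⊆ ℂ⁴` has codimension at least 2": `S` contains no hypersurface,
i.e. no zero locus of a polynomial of positive degree is contained in `S`
(hypersurfaces have codimension 1). -/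
def HasCodimAtLeastTwo (S : Set (Fin 4 → ℂ)) : Prop :=
  ∀ p : MvPolynomial (Fin 4) ℂ, 0 < p.totalDegree →
    ¬ ({x | MvPolynomial.eval x p = 0} ⊆ S)

/-!
If `s₀ < s₋₁`, no `Σ λᵢ fᵢ` is injective. If `s₀ = s₋₁`, `Σ λᵢ fᵢ` is non-injective exactly
where the determinant of the pencil vanishes, a polynomial in `λ` vanishing at `0`. In both cases
the non-injective locus contains the zero set of a polynomial vanishing at `0`; such a zero set
is either a hypersurface or, if the polynomial is constant, all of `ℂ⁴`.
-/

open MvPolynomial Matrix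

theorem not_hasCodimAtLeastTwo_of_zeroLocus_subset {S : Set (Fin 4 → ℂ)}
    (p : MvPolynomial (Fin 4) ℂ) (hp : eval 0 p = 0) (hS : {x | eval x p = 0} ⊆ S) :
    ¬ HasCodimAtLeastTwo S := by
  intro hcodim
  rcases Nat.eq_zero_or_pos p.totalDegree with hdeg | hdeg
  · have hp_zero : p = 0 := by
      rw [totalDegree_eq_zero_iff_eq_C.mp hdeg] at hp ⊢
      simpa using hp
    exact hcodim (X 0) (by simp) fun x _ => hS (by simp [hp_zero])
  · exact hcodim p hdeg hS

theorem Matrix.not_injective_mulVecLin_of_card_lt {K m n : Type*} [Field K] [Fintype m]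
    [Fintype n] (A : Matrix m n K) (h : Fintype.card m < Fintype.card n) :
    ¬ Function.Injective A.mulVecLin := fun hinj => by
  have := LinearMap.finrank_le_finrank_of_injective hinj
  simp only [Module.finrank_fintype_fun_eq_card] at this
  omega

noncomputable def Matrix.pencilDet {ι n R : Type*} [Fintype ι] [Fintype n] [DecidableEq n]
    [CommRing R] (A : ι → Matrix n n R) : MvPolynomial ι R :=
  (∑ i, (X i : MvPolynomial ι R) • (A i).map C).det

theorem Matrix.eval_pencilDet {ι n R : Type*} [Fintype ι] [Fintype n] [DecidableEq n]
    [CommRing R] (A : ι → Matrix n n R) (x : ι → R) :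
    eval x (pencilDet A) = (∑ i, x i • A i).det := by
  rw [pencilDet, RingHom.map_det]
  congr 1
  ext j k
  simp [Matrix.sum_apply]

/-- If the locus of `λ ∈ ℂ⁴` where `Σ λᵢ fᵢ : ℂ^{sm1} → ℂ^{s0}` fails to be injective
has codimension at least 2 (local injectivity), and `sm1 ≥ 1`, then `s0 ≥ sm1 + 1`. -/
theorem locally_injective_dim (sm1 s0 : ℕ) (hs : 1 ≤ sm1)
    (f : Fin 4 → Matrix (Fin s0) (Fin sm1) ℂ)
    (hloc : HasCodimAtLeastTwo
      {lam : Fin 4 → ℂ | ¬ Function.Injective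
        (Matrix.mulVecLin (∑ i : Fin 4, lam i • f i))}) :
    sm1 + 1 ≤ s0 := by
  by_contra! hcon
  rcases (Nat.lt_succ_iff.mp hcon).lt_or_eq with hlt | rfl
  · refine not_hasCodimAtLeastTwo_of_zeroLocus_subset 0 (map_zero _) (fun x _ => ?_) hloc
    exact Matrix.not_injective_mulVecLin_of_card_lt _ (by simpa using hlt)
  · have : Nonempty (Fin s0) := ⟨⟨0, hs⟩⟩
    refine not_hasCodimAtLeastTwo_of_zeroLocus_subset (pencilDet f) ?_ (fun x hx => ?_) hloc
    · rw [eval_pencilDet]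
      simp
    · rw [Set.mem_ofPred_eq, eval_pencilDet] at hx
      rw [Set.mem_ofPred_eq, coe_mulVecLin, mulVec_injective_iff_isUnit, isUnit_iff_isUnit_det, hx]
      exact not_isUnit_zero
end

section
/- If a representation R of the quiver Q with dimension vector (a,b,c), c ≥ 1, is globally surjective (for every nonzero (λ₀,...,λ₃) ∈ ℂ⁴, Σλᵢgᵢ : ℂ^b → ℂ^c is surjective), then b ≥ c + 3. -/
/-!
The columns of `Σ λᵢ gᵢ` define bilinear forms `B_k(x, y) = Σ (gᵢ)ⱼₖ xᵢ yⱼ` on `ℂ⁴ × ℂ^c`.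
Global surjectivity says that they vanish simultaneously only where `x = 0` or `y = 0`, so by the
Nullstellensatz every product `xᵢ yⱼ` lies in the radical of `I = (B_k)`, and `(xᵢ yⱼ)^(N+1) ∈ I`
for some `N`. In large bidegree `(d+1, d+1)` every monomial is divisible by one of these powers,
so the space `S_d` of polynomials of bidegree `(d, d)` satisfies `S_{E+n} ⊆ Vⁿ S_E`, where `V` is
the span of the `B_k`. Counting dimensions, `dim S_d` grows like `d^(c+2)` while `dim Vⁿ` grows
at most like `n^(b-1)`, hence `c + 2 ≤ b - 1`. This is a Hilbert-function proof that the cone over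
the Segre variety `ℙ³ × ℙ^(c-1)`, of dimension `c + 3`, cannot be cut down to its vertex by fewer
than `c + 3` linear sections.
-/

open scoped Pointwise
open Module Matrix

-- The factor `n + 1` replaces the bound `(n + 1) ^ (b - 1)`, whose truncated exponent loses `b = 0`.
theorem Nat.multichoose_mul_succ_le_pow (b n : ℕ) : b.multichoose n * (n + 1) ≤ (n + 1) ^ b := by
  rcases b with _ | b
  · cases n <;> simp
  · rw [Nat.multichoose_eq, pow_succ, show b + 1 + n - 1 = n + b by omega, Nat.choose_symm_add]
    gcongr
    simpa [show n + b + 1 - b = n + 1 by omega] using Nat.choose_le_sub_pow (n + b) b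

theorem Nat.le_of_forall_pow_le_mul_pow {p q C : ℕ} (h : ∀ m, (m + 1) ^ p ≤ C * (m + 1) ^ q) :
    p ≤ q := by
  by_contra! hqp
  have := calc C * (C + 1) ^ q < (C + 1) * (C + 1) ^ q := by gcongr; omega
    _ = (C + 1) ^ (q + 1) := by ring
    _ ≤ (C + 1) ^ p := Nat.pow_le_pow_right (by omega) hqp
  exact (h C).not_gt this

theorem Fin.sum_val_le_mul {r m : ℕ} (a : Fin r → Fin (m + 1)) : ∑ i, (a i : ℕ) ≤ r * m := by
  simpa using Finset.sum_le_card_nsmul Finset.univ (fun i => (a i : ℕ)) m fun i _ => Fin.is_le _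

theorem Fintype.exists_lt_of_card_mul_lt_sum {α : Type*} [Fintype α] {f : α → ℕ} {N : ℕ}
    (h : Fintype.card α * N < ∑ a, f a) : ∃ a, N < f a := by
  obtain ⟨a, -, ha⟩ := Finset.exists_lt_of_sum_lt (s := Finset.univ) (f := fun _ => N)
    (by simpa using h)
  exact ⟨a, ha⟩

theorem Ideal.exists_pow_mem_of_mem_radical {R ι : Type*} [CommSemiring R] [Finite ι]
    {J : Ideal R} {f : ι → R} (hf : ∀ i, f i ∈ J.radical) : ∃ n, ∀ i, f i ^ n ∈ J := by
  obtain ⟨n, hn⟩ := Ideal.exists_pow_le_of_le_radical_of_fg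
    (Ideal.span_le.2 (Set.range_subset_iff.2 hf)) (Submodule.fg_span (Set.finite_range f))
  exact ⟨n, fun i => hn (Ideal.pow_mem_pow (Ideal.subset_span (Set.mem_range_self i)) n)⟩

theorem Matrix.eq_zero_of_vecMul_eq_zero_of_surjective {m n R : Type*} [CommRing R] [Fintype m]
    [Fintype n] {A : Matrix m n R} (hA : Function.Surjective A.mulVec) {v : m → R}
    (hv : v ᵥ* A = 0) : v = 0 := by
  classical
  obtain ⟨A', hA'⟩ := mulVec_surjective_iff_exists_right_inverse.1 hA
  rw [← vecMul_one v, ← hA', ← vecMul_vecMul, hv, zero_vecMul]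

namespace Submodule

theorem le_pow_mul_of_forall_le_mul {R A : Type*} [CommSemiring R] [Semiring A] [Algebra R A]
    {S : ℕ → Submodule R A} {V : Submodule R A} {E : ℕ}
    (h : ∀ d, E ≤ d → S (d + 1) ≤ V * S d) (n : ℕ) : S (E + n) ≤ V ^ n * S E := by
  induction n with
  | zero => simp
  | succ n ih =>
    calc S (E + n + 1) ≤ V * S (E + n) := h _ (Nat.le_add_right E n)
      _ ≤ V * (V ^ n * S E) := mul_le_mul_right ih V
      _ = V ^ (n + 1) * S E := by rw [pow_succ', mul_assoc]

variable {K A : Type*} [Field K]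

theorem finrank_mul_le [Ring A] [Algebra K A] (M N : Submodule K A)
    [FiniteDimensional K M] [FiniteDimensional K N] :
    finrank K ↥(M * N) ≤ finrank K M * finrank K N := by
  rw [← mulMap_range, ← finrank_tensorProduct]
  exact LinearMap.finrank_range_le _

theorem finrank_span_pow_le [CommRing A] [Algebra K A] {b : ℕ} (B : Fin b → A) (n : ℕ) :
    finrank K ↥(span K (Set.range B) ^ n) ≤ b.multichoose n := by
  have hsub : Set.range B ^ n ⊆
      Set.range fun γ : Sym (Fin b) n => ((γ : Multiset (Fin b)).map B).prod := by
    induction n with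
    | zero => exact fun x hx => ⟨Sym.nil, by simp_all⟩
    | succ n ih =>
      rw [pow_succ]
      rintro _ ⟨_, hx, _, ⟨k, rfl⟩, rfl⟩
      obtain ⟨γ, rfl⟩ := ih hx
      exact ⟨k ::ₛ γ, by simp [Sym.coe_cons, mul_comm]⟩
  have := FiniteDimensional.span_of_finite K
    (Set.finite_range fun γ : Sym (Fin b) n => ((γ : Multiset (Fin b)).map B).prod)
  rw [span_pow, ← Sym.card_sym_fin_eq_multichoose]
  exact (finrank_mono (span_mono hsub)).trans (finrank_range_le_card _)

end Submodule

namespace MvPolynomial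

variable {K : Type*} [Field K]

section WeightedHomogeneous

variable {σ M : Type*} [AddCancelCommMonoid M] {w : σ → M}

theorem weightedHomogeneousComponent_add_mul {φ : MvPolynomial σ K} {n : M}
    (hφ : φ.IsWeightedHomogeneous w n) (m : M) (t : MvPolynomial σ K) :
    weightedHomogeneousComponent w (m + n) (t * φ) = weightedHomogeneousComponent w m t * φ := by
  induction t using MvPolynomial.induction_on' with
  | monomial u a =>
    have hu := isWeightedHomogeneous_monomial w u a rfl
    by_cases h : Finsupp.weight w u = m
    · rw [← h, hu.weightedHomogeneousComponent_same,
        (hu.mul hφ).weightedHomogeneousComponent_same]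
    · rw [(hu.mul hφ).weightedHomogeneousComponent_ne _ (by simpa using Ne.symm h),
        hu.weightedHomogeneousComponent_ne _ (Ne.symm h), zero_mul]
  | add p q hp hq => rw [add_mul, map_add, hp, hq, map_add, add_mul]

theorem mem_span_mul_weightedHomogeneousSubmodule {b : ℕ} {B : Fin b → MvPolynomial σ K} {n : M}
    (hB : ∀ k, (B k).IsWeightedHomogeneous w n) {m : M} {p : MvPolynomial σ K}
    (hp : p ∈ Ideal.span (Set.range B)) (hpw : p.IsWeightedHomogeneous w (m + n)) :
    p ∈ Submodule.span K (Set.range B) * weightedHomogeneousSubmodule K w m := by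
  obtain ⟨t, rfl⟩ := Ideal.mem_span_range_iff_exists_fun.mp hp
  rw [← hpw.weightedHomogeneousComponent_same, map_sum]
  refine Submodule.sum_mem _ fun k _ => ?_
  rw [weightedHomogeneousComponent_add_mul (hB k), mul_comm (weightedHomogeneousComponent _ _ _)]
  exact Submodule.mul_mem_mul (Submodule.subset_span ⟨k, rfl⟩)
    (weightedHomogeneousComponent_isWeightedHomogeneous _ _)

end WeightedHomogeneous

section Bidegree

variable {ι κ : Type*}

def bidegree : ι ⊕ κ → ℕ × ℕ := Sum.elim (fun _ => (1, 0)) (fun _ => (0, 1))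

@[simp] theorem bidegree_inl (i : ι) : bidegree (κ := κ) (.inl i) = (1, 0) := rfl

@[simp] theorem bidegree_inr (j : κ) : bidegree (ι := ι) (.inr j) = (0, 1) := rfl

variable [Fintype ι] [Fintype κ]

theorem weight_bidegree (u : ι ⊕ κ →₀ ℕ) :
    Finsupp.weight bidegree u = (∑ i, u (.inl i), ∑ j, u (.inr j)) := by
  simp [Finsupp.weight_eq_sum, Fintype.sum_sum_type, bidegree, Prod.ext_iff, Prod.fst_sum,
    Prod.snd_sum]

instance (d e : ℕ) :
    FiniteDimensional K (weightedHomogeneousSubmodule K (bidegree (ι := ι) (κ := κ)) (d, e)) := by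
  rw [weightedHomogeneousSubmodule_eq_finsupp_supported]
  have : {u : ι ⊕ κ →₀ ℕ | Finsupp.weight bidegree u = (d, e)}.Finite := by
    refine (Finsupp.finite_of_degree_le (d + e)).subset fun u hu => ?_
    simp only [Set.mem_ofPred_eq, weight_bidegree, Prod.ext_iff] at hu
    simp [Finsupp.degree_eq_sum, Fintype.sum_sum_type, hu]
  have := this.to_subtype
  exact Module.Finite.of_basis (basisRestrictSupport K _)

theorem weightedHomogeneousSubmodule_bidegree_succ_le {b N d : ℕ}
    {B : Fin b → MvPolynomial (ι ⊕ κ) K} (hB : ∀ k, (B k).IsWeightedHomogeneous bidegree (1, 1))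
    (hN : ∀ i j, (X (.inl i) * X (.inr j)) ^ (N + 1) ∈ Ideal.span (Set.range B))
    (hd : (Fintype.card ι + Fintype.card κ) * N ≤ d) :
    weightedHomogeneousSubmodule K bidegree (d + 1, d + 1) ≤
      Submodule.span K (Set.range B) * weightedHomogeneousSubmodule K bidegree (d, d) := by
  classical
  intro p hp
  induction hp using IsWeightedHomogeneous.induction_on with
  | zero => exact zero_mem _
  | add p q _ _ hp hq => exact add_mem hp hq
  | monomial u a hu =>
    rw [show monomial u a = a • monomial u 1 by rw [smul_monomial, smul_eq_mul, mul_one]]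
    refine Submodule.smul_mem _ a ?_
    obtain ⟨hx, hy⟩ : ∑ i, u (.inl i) = d + 1 ∧ ∑ j, u (.inr j) = d + 1 := by
      simpa [weight_bidegree] using hu
    obtain ⟨i, hi⟩ := Fintype.exists_lt_of_card_mul_lt_sum (f := fun i => u (.inl i)) (N := N)
      (by rw [hx]; nlinarith)
    obtain ⟨j, hj⟩ := Fintype.exists_lt_of_card_mul_lt_sum (f := fun j => u (.inr j)) (N := N)
      (by rw [hy]; nlinarith)
    obtain ⟨v, rfl⟩ : ∃ v,
        u = Finsupp.single (.inl i) (N + 1) + Finsupp.single (.inr j) (N + 1) + v := by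
      refine exists_add_of_le fun s => ?_
      rcases s with i' | j' <;>
        simp only [Finsupp.add_apply, Finsupp.single_apply, Sum.inl.injEq, Sum.inr.injEq,
          reduceCtorEq, if_false, add_zero, zero_add] <;>
        split_ifs with h <;> (try subst h) <;> omega
    have hv : (N, N) + Finsupp.weight bidegree v = (d, d) := by
      simp only [map_add, Finsupp.weight_single, bidegree_inl, bidegree_inr, Prod.ext_iff,
        Prod.fst_add, Prod.snd_add, Prod.smul_fst, Prod.smul_snd, smul_eq_mul] at hu ⊢
      omega
    have hXY : ((X (.inl i) * X (.inr j)) ^ (N + 1) : MvPolynomial (ι ⊕ κ) K)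
        |>.IsWeightedHomogeneous bidegree ((N, N) + (1, 1)) := by
      convert ((isWeightedHomogeneous_X K bidegree (.inl i)).mul
        (isWeightedHomogeneous_X K bidegree (.inr j))).pow (N + 1) using 1
      simp
    rw [add_assoc, monomial_single_add, monomial_single_add, ← mul_assoc, ← mul_pow, ← hv]
    refine mul_le_mul_right (weightedHomogeneousSubmodule_mul bidegree _ _) _ ?_
    rw [← mul_assoc]
    exact Submodule.mul_mem_mul (mem_span_mul_weightedHomogeneousSubmodule hB (hN i j) hXY)
      (isWeightedHomogeneous_monomial _ _ _ rfl)

end Bidegree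

theorem pow_add_le_finrank_bidegree {r s m d : ℕ} (hr : r * m ≤ d) (hs : s * m ≤ d) :
    (m + 1) ^ (r + s) ≤ finrank K
      (weightedHomogeneousSubmodule K (bidegree (ι := Fin (r + 1)) (κ := Fin (s + 1))) (d, d)) := by
  let e (a : (Fin r → Fin (m + 1)) × (Fin s → Fin (m + 1))) : Fin (r + 1) ⊕ Fin (s + 1) →₀ ℕ :=
    Finsupp.equivFunOnFinite.symm <| Sum.elim (Fin.cons (d - ∑ i, (a.1 i : ℕ)) fun i => a.1 i)
      (Fin.cons (d - ∑ j, (a.2 j : ℕ)) fun j => a.2 j)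
  have he : Function.Injective e := by
    intro a a' h
    ext i
    · simpa [e] using DFunLike.congr_fun h (.inl i.succ)
    · simpa [e] using DFunLike.congr_fun h (.inr i.succ)
  have hwt (a) : Finsupp.weight bidegree (e a) = (d, d) := by
    have := Fin.sum_val_le_mul a.1
    have := Fin.sum_val_le_mul a.2
    simp only [weight_bidegree, e, Finsupp.coe_equivFunOnFinite_symm, Sum.elim_inl,
      Sum.elim_inr, Fin.sum_cons, Prod.mk.injEq]
    omega
  have hli : LinearIndependent K fun a => (monomial (e a) 1 : MvPolynomial _ K) := by
    simpa [Function.comp_def] using (basisMonomials _ K).linearIndependent.comp e he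
  calc (m + 1) ^ (r + s) = Fintype.card ((Fin r → Fin (m + 1)) × (Fin s → Fin (m + 1))) := by
        simp [pow_add]
    _ = finrank K (Submodule.span K (Set.range fun a => (monomial (e a) 1 : MvPolynomial _ K))) :=
        (finrank_span_eq_card hli).symm
    _ ≤ _ := Submodule.finrank_mono <| Submodule.span_le.2 <| Set.range_subset_iff.2 fun a =>
        isWeightedHomogeneous_monomial _ _ _ (hwt a)

theorem add_lt_of_X_mul_X_mem_radical {r s b : ℕ}
    {B : Fin b → MvPolynomial (Fin (r + 1) ⊕ Fin (s + 1)) K}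
    (hB : ∀ k, (B k).IsWeightedHomogeneous bidegree (1, 1))
    (hrad : ∀ i j, X (.inl i) * X (.inr j) ∈ (Ideal.span (Set.range B)).radical) :
    r + s < b := by
  obtain ⟨N, hN⟩ := Ideal.exists_pow_mem_of_mem_radical (J := Ideal.span (Set.range B))
    (f := fun p : Fin (r + 1) × Fin (s + 1) => X (.inl p.1) * X (.inr p.2)) fun p => by
      exact hrad p.1 p.2
  let S (d : ℕ) :=
    weightedHomogeneousSubmodule K (bidegree (ι := Fin (r + 1)) (κ := Fin (s + 1))) (d, d)
  let V := Submodule.span K (Set.range B)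
  let E := (r + 1 + (s + 1)) * N
  have hS (n : ℕ) : S (E + n) ≤ V ^ n * S E :=
    Submodule.le_pow_mul_of_forall_le_mul (fun d hd =>
      weightedHomogeneousSubmodule_bidegree_succ_le hB
        (fun i j => by rw [pow_succ]; exact Ideal.mul_mem_right _ _ (hN (i, j)))
        (by simpa using hd)) n
  have hV (n : ℕ) : FiniteDimensional K ↥(V ^ n) :=
    Module.Finite.iff_fg.2 ((Submodule.fg_span (Set.finite_range B)).pow n)
  suffices ∀ m, (m + 1) ^ (r + s + 1) ≤ ((r + s + 1) ^ b * finrank K (S E)) * (m + 1) ^ b from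
    Nat.le_of_forall_pow_le_mul_pow this
  intro m
  set n := (r + s + 1) * m with hn
  have : FiniteDimensional K ↥(V ^ n * S E) := Module.Finite.iff_fg.2
    ((Module.Finite.iff_fg.1 (hV n)).mul (Module.Finite.iff_fg.1 inferInstance))
  calc (m + 1) ^ (r + s + 1) = (m + 1) ^ (r + s) * (m + 1) := pow_succ _ _
    _ ≤ finrank K (S (E + n)) * (n + 1) := by
        gcongr
        · exact pow_add_le_finrank_bidegree (by nlinarith) (by nlinarith)
        · nlinarith
    _ ≤ finrank K ↥(V ^ n * S E) * (n + 1) := by gcongr; exact Submodule.finrank_mono (hS n)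
    _ ≤ b.multichoose n * finrank K (S E) * (n + 1) := by
        gcongr
        exact (Submodule.finrank_mul_le _ _).trans
          (by gcongr; exact Submodule.finrank_span_pow_le B n)
    _ ≤ (n + 1) ^ b * finrank K (S E) := by
        rw [mul_right_comm]; gcongr; exact Nat.multichoose_mul_succ_le_pow b n
    _ ≤ ((r + s + 1) * (m + 1)) ^ b * finrank K (S E) := by gcongr; nlinarith
    _ = _ := by rw [mul_pow]; ring

section BilinearForm

variable {ι κ β : Type*}

theorem X_mul_X_mem_radical_of_eval_eq_zero [IsAlgClosed K] [Finite ι] [Finite κ]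
    {B : β → MvPolynomial (ι ⊕ κ) K}
    (hB : ∀ x : ι ⊕ κ → K, (∀ k, eval x (B k) = 0) → x ∘ Sum.inl = 0 ∨ x ∘ Sum.inr = 0)
    (i : ι) (j : κ) : X (.inl i) * X (.inr j) ∈ (Ideal.span (Set.range B)).radical := by
  rw [← vanishingIdeal_zeroLocus_eq_radical (K := K), mem_vanishingIdeal_iff]
  intro x hx
  rcases hB x fun k => by simpa using hx _ (Ideal.subset_span (Set.mem_range_self k)) with h | h
  · simp [show x (.inl i) = 0 from congrFun h i]
  · simp [show x (.inr j) = 0 from congrFun h j]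

variable [Fintype ι] [Fintype κ]

noncomputable def bilinearForm (g : ι → Matrix κ β K) (k : β) : MvPolynomial (ι ⊕ κ) K :=
  ∑ i, ∑ j, C (g i j k) * (X (.inl i) * X (.inr j))

theorem isWeightedHomogeneous_bilinearForm (g : ι → Matrix κ β K) (k : β) :
    (bilinearForm g k).IsWeightedHomogeneous bidegree (1, 1) := by
  refine .sum _ _ _ fun i _ => .sum _ _ _ fun j _ => .C_mul ?_ _
  simpa using (isWeightedHomogeneous_X K bidegree (.inl i)).mul
    (isWeightedHomogeneous_X K bidegree (.inr j))

theorem eval_bilinearForm (g : ι → Matrix κ β K) (x : ι ⊕ κ → K) (k : β) :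
    eval x (bilinearForm g k) = ((x ∘ Sum.inr) ᵥ* ∑ i, x (.inl i) • g i) k := by
  simp only [bilinearForm, map_sum, map_mul, eval_C, eval_X, vecMul, dotProduct,
    Matrix.sum_apply, Matrix.smul_apply, smul_eq_mul, Finset.mul_sum, Function.comp_apply]
  rw [Finset.sum_comm]
  exact Finset.sum_congr rfl fun j _ => Finset.sum_congr rfl fun i _ => by ring

theorem eq_zero_or_eq_zero_of_eval_bilinearForm_eq_zero [Fintype β] (g : ι → Matrix κ β K)
    (hg : ∀ lam : ι → K, lam ≠ 0 → Function.Surjective (∑ i, lam i • g i).mulVec)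
    {x : ι ⊕ κ → K} (hx : ∀ k, eval x (bilinearForm g k) = 0) :
    x ∘ Sum.inl = 0 ∨ x ∘ Sum.inr = 0 := by
  refine or_iff_not_imp_left.2 fun h => eq_zero_of_vecMul_eq_zero_of_surjective (hg _ h) ?_
  ext k
  exact (eval_bilinearForm g x k).symm.trans (hx k)

end BilinearForm

end MvPolynomial

open MvPolynomial in
/-- If `Σ λᵢ gᵢ : ℂ^b → ℂ^c` is surjective for every nonzero `λ ∈ ℂ⁴` (global
surjectivity) and `c ≥ 1`, then `b ≥ c + 3`. -/
theorem globally_surjective_dim (b c : ℕ) (hc : 1 ≤ c)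
    (g : Fin 4 → Matrix (Fin c) (Fin b) ℂ)
    (hsurj : ∀ lam : Fin 4 → ℂ, lam ≠ 0 →
      Function.Surjective (Matrix.mulVecLin (∑ i : Fin 4, lam i • g i))) :
    c + 3 ≤ b := by
  obtain ⟨c, rfl⟩ := Nat.exists_eq_add_of_le' hc
  have := add_lt_of_X_mul_X_mem_radical (r := 3) (s := c) (isWeightedHomogeneous_bilinearForm g)
    (X_mul_X_mem_radical_of_eval_eq_zero fun _ =>
      eq_zero_or_eq_zero_of_eval_bilinearForm_eq_zero g hsurj)
  omega
end
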